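/- If s is a τ-assignment over a finite vocabulary τ, and λ₁, λ₂ ⊆ s are sets of literals true in s with |λ₁| < |λ₂|, then any CNF triple (θ₂, θ'₂, χ₂) such that θ₂ ∧ χ₂ defines s and θ'₂ ∧ χ₂ defines s △ λ₂ has total size at least |τ| + |λ₂|, while there is a triple (θ₁, θ'₁, χ₁) with θ₁ ∧ χ₁ defining s and θ'₁ ∧ χ₁ defining s △ λ₁ of total size exactly |τ| + |λ₁|. -/

import Mathlib

inductive PLF (V : Type) : Type
  | bot  : PLF V
  | var  : V → PLF V
  | neg  : PLF V → PLF V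
  | and  : PLF V → PLF V → PLF V
  | or   : PLF V → PLF V → PLF V

namespace PLF
variable {V : Type}
def eval (s : V → Bool) : PLF V → Bool
  | bot => false
  | var v => s v
  | neg φ => !(eval s φ)
  | and φ ψ => eval s φ && eval s ψ
  | or φ ψ => eval s φ || eval s ψ
end PLF

inductive Lit (V : Type) : Type
  | pos : V → Lit V
  | neg : V → Lit V

namespace Lit
variable {V : Type}
def eval (s : V → Bool) : Lit V → Bool
  | pos v => s v
  | neg v => !(s v)
def compl : Lit V → Lit V
  | pos v => neg v
  | neg v => pos v
def var : Lit V → V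
  | pos v => v
  | neg v => v
end Lit

abbrev Clause (V : Type) := List (Lit V)
abbrev CNF (V : Type) := List (Clause V)

def Clause.ceval {V : Type} (s : V → Bool) (C : Clause V) : Bool := C.any (Lit.eval s)
def CNF.feval {V : Type} (s : V → Bool) (F : CNF V) : Bool := F.all (Clause.ceval s)
def CNF.size {V : Type} (F : CNF V) : Nat := (F.map List.length).sum
def Term.teval {V : Type} (s : V → Bool) (t : List (Lit V)) : Bool := t.all (Lit.eval s)


/-!
If a CNF formula has `s` as its only model, then for every variable `v` the literal on `v` that is
true in `s` occurs in it: otherwise each clause is satisfied in `s` by a literal on another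
variable, and flipping `v` in `s` would give a second model. So if `θ ∧ χ` defines `s` and `θ' ∧ χ`
defines `s'`, these formulas contain the `|τ|` literals true in `s` and the `|τ|` literals true in
`s'`; the literal sets overlap only on the variables where `s` and `s'` agree, and only through `χ`,
which gives the lower bound `|τ| + #{v | s v ≠ s' v}`. Unit clauses attain it.
-/

deriving instance DecidableEq for Lit

namespace Lit

variable {V : Type}

def ofAssignment (s : V → Bool) (v : V) : Lit V := if s v then pos v else neg v

theorem eval_ofAssignment (s t : V → Bool) (v : V) :
    (ofAssignment s v).eval t = true ↔ t v = s v := by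
  unfold ofAssignment; cases s v <;> simp [eval]

theorem ofAssignment_eq_ofAssignment_iff {s t : V → Bool} {v w : V} :
    ofAssignment s v = ofAssignment t w ↔ v = w ∧ s v = t w := by
  unfold ofAssignment; cases s v <;> cases t w <;> simp

theorem ofAssignment_injective (s : V → Bool) : Function.Injective (ofAssignment s) :=
  fun _ _ h => (ofAssignment_eq_ofAssignment_iff.mp h).1

theorem eq_ofAssignment {m : Lit V} {s : V → Bool} (hm : m.eval s = true) :
    m = ofAssignment s m.var := by
  cases m <;> simp_all [eval, var, ofAssignment]

theorem eval_update_of_var_ne [DecidableEq V] {m : Lit V} {v : V} (hv : m.var ≠ v)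
    (s : V → Bool) (b : Bool) : m.eval (Function.update s v b) = m.eval s := by
  cases m <;> simp_all [eval, var, Function.update_of_ne]

def trueLits [Fintype V] [DecidableEq V] (s : V → Bool) : Finset (Lit V) :=
  Finset.univ.image (ofAssignment s)

variable [Fintype V] [DecidableEq V]

theorem card_trueLits (s : V → Bool) : (trueLits s).card = Fintype.card V := by
  rw [trueLits, Finset.card_image_of_injective _ (ofAssignment_injective s), Finset.card_univ]

theorem card_trueLits_inter (s t : V → Bool) :
    (trueLits s ∩ trueLits t).card = (Finset.univ.filter fun v => s v = t v).card := by
  have : trueLits s ∩ trueLits t = (Finset.univ.filter fun v => s v = t v).image (ofAssignment s) := by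
    ext m
    simp only [trueLits, Finset.mem_inter, Finset.mem_image, Finset.mem_univ, true_and,
      Finset.mem_filter]
    constructor
    · rintro ⟨⟨v, rfl⟩, w, hw⟩
      obtain ⟨rfl, hvw⟩ := ofAssignment_eq_ofAssignment_iff.mp hw
      exact ⟨w, hvw.symm, rfl⟩
    · rintro ⟨v, hv, rfl⟩
      exact ⟨⟨v, rfl⟩, v, ofAssignment_eq_ofAssignment_iff.mpr ⟨rfl, hv.symm⟩⟩
  rw [this, Finset.card_image_of_injective _ (ofAssignment_injective s)]

end Lit

open Finset in
theorem Finset.card_add_card_le_of_subset_union {α : Type*} [DecidableEq α]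
    {S S' T T' C : Finset α} (h : S ⊆ T ∪ C) (h' : S' ⊆ T' ∪ C) :
    #S + #S' ≤ #T + #T' + #C + #(S ∩ S') := by
  have hunion : #((S \ T) ∪ (S' \ T')) ≤ #C :=
    card_le_card fun x hx => by
      rcases mem_union.mp hx with hx | hx
      · exact (mem_union.mp (h (mem_sdiff.mp hx).1)).resolve_left (mem_sdiff.mp hx).2
      · exact (mem_union.mp (h' (mem_sdiff.mp hx).1)).resolve_left (mem_sdiff.mp hx).2
  have hinter : #((S \ T) ∩ (S' \ T')) ≤ #(S ∩ S') :=
    card_le_card (inter_subset_inter sdiff_subset sdiff_subset)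
  have := card_union_add_card_inter (S \ T) (S' \ T')
  have := card_le_card_sdiff_add_card (s := S) (t := T)
  have := card_le_card_sdiff_add_card (s := S') (t := T')
  omega

namespace CNF

variable {V : Type}

def Defines (F : CNF V) (s : V → Bool) : Prop := ∀ t, F.feval t = true ↔ t = s

theorem feval_append (F G : CNF V) (t : V → Bool) :
    (F ++ G).feval t = (F.feval t && G.feval t) :=
  List.all_append

theorem defines_append_iff {F G : CNF V} {s : V → Bool} :
    (F ++ G).Defines s ↔ ∀ t, (F.feval t && G.feval t) = true ↔ t = s := by
  simp only [Defines, feval_append]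

def lits [DecidableEq V] (F : CNF V) : Finset (Lit V) := F.flatten.toFinset

theorem card_lits_le_size [DecidableEq V] (F : CNF V) : F.lits.card ≤ F.size :=
  (List.toFinset_card_le _).trans_eq List.length_flatten

theorem lits_append [DecidableEq V] (F G : CNF V) : (F ++ G).lits = F.lits ∪ G.lits := by
  simp only [lits, List.flatten_append, List.toFinset_append]

noncomputable def units (s : V → Bool) (l : Finset V) : CNF V := l.toList.map fun v => [Lit.ofAssignment s v]

theorem feval_units (s t : V → Bool) (l : Finset V) :
    (units s l).feval t = true ↔ ∀ v ∈ l, t v = s v := by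
  simp [units, feval, Clause.ceval, Lit.eval_ofAssignment]

theorem size_units (s : V → Bool) (l : Finset V) : (units s l).size = l.card := by
  simp [units, size, Function.comp_def]

theorem units_congr {s t : V → Bool} {l : Finset V} (h : ∀ v ∈ l, s v = t v) :
    units s l = units t l :=
  List.map_congr_left fun v hv => by simp only [Lit.ofAssignment, h v (Finset.mem_toList.mp hv)]

variable [DecidableEq V]

theorem feval_update_of_ofAssignment_not_mem {F : CNF V} {s : V → Bool} (hs : F.feval s = true)
    {v : V} (hv : Lit.ofAssignment s v ∉ F.flatten) : F.feval (Function.update s v (!s v)) = true := by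
  simp only [feval, Clause.ceval, List.all_eq_true, List.any_eq_true] at hs ⊢
  intro C hC
  obtain ⟨m, hmC, hms⟩ := hs C hC
  have hmv : m.var ≠ v := by
    rintro rfl
    exact hv (List.mem_flatten.mpr ⟨C, hC, Lit.eq_ofAssignment hms ▸ hmC⟩)
  exact ⟨m, hmC, Lit.eval_update_of_var_ne hmv s _ ▸ hms⟩

theorem Defines.ofAssignment_mem {F : CNF V} {s : V → Bool} (h : F.Defines s) (v : V) :
    Lit.ofAssignment s v ∈ F.flatten := by
  by_contra hv
  have := congrFun ((h _).mp (feval_update_of_ofAssignment_not_mem ((h s).mpr rfl) hv)) v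
  simp at this

theorem Defines.trueLits_subset [Fintype V] {F : CNF V} {s : V → Bool} (h : F.Defines s) :
    Lit.trueLits s ⊆ F.lits := by
  simp only [Lit.trueLits, Finset.image_subset_iff, Finset.mem_univ, forall_const, lits,
    List.mem_toFinset]
  exact h.ofAssignment_mem

theorem card_add_card_ne_le_size [Fintype V] {θ θ' χ : CNF V} {s s' : V → Bool}
    (h : (θ ++ χ).Defines s) (h' : (θ' ++ χ).Defines s') :
    Fintype.card V + (Finset.univ.filter fun v => s v ≠ s' v).card ≤
      θ.size + θ'.size + χ.size := by
  have hcount := Finset.card_add_card_le_of_subset_union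
    (lits_append θ χ ▸ h.trueLits_subset) (lits_append θ' χ ▸ h'.trueLits_subset)
  rw [Lit.card_trueLits, Lit.card_trueLits, Lit.card_trueLits_inter] at hcount
  have hsplit : (Finset.univ.filter fun v => s v = s' v).card +
      (Finset.univ.filter fun v => s v ≠ s' v).card = Fintype.card V :=
    Finset.card_filter_add_card_filter_not _
  have := card_lits_le_size θ
  have := card_lits_le_size θ'
  have := card_lits_le_size χ
  omega

theorem defines_units_append_units_compl [Fintype V] (s : V → Bool) (l : Finset V) :
    (units s l ++ units s lᶜ).Defines s := by
  refine defines_append_iff.mpr fun t => ?_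
  rw [Bool.and_eq_true, feval_units, feval_units]
  constructor
  · rintro ⟨hl, hlc⟩
    funext v
    by_cases hv : v ∈ l
    · exact hl v hv
    · exact hlc v (Finset.mem_compl.mpr hv)
  · rintro rfl
    exact ⟨fun _ _ => rfl, fun _ _ => rfl⟩

end CNF

theorem filter_ne_flip {V : Type} [Fintype V] [DecidableEq V] (s : V → Bool) (L : Finset V) :
    (Finset.univ.filter fun v => s v ≠ if v ∈ L then !s v else s v) = L := by
  ext v
  by_cases hv : v ∈ L <;> simp [hv]

theorem stmt11_general {V : Type} [Fintype V] [DecidableEq V] (s : V → Bool)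
    (L1 L2 : Finset V) :
    (∀ θ₂ θ'₂ χ₂ : CNF V,
      (∀ t, (θ₂.feval t && χ₂.feval t) = true ↔ t = s) →
      (∀ t, (θ'₂.feval t && χ₂.feval t) = true ↔
        t = (fun v => if v ∈ L2 then !(s v) else s v)) →
      Fintype.card V + L2.card ≤ θ₂.size + θ'₂.size + χ₂.size) ∧
    (∃ θ₁ θ'₁ χ₁ : CNF V,
      (∀ t, (θ₁.feval t && χ₁.feval t) = true ↔ t = s) ∧
      (∀ t, (θ'₁.feval t && χ₁.feval t) = true ↔
        t = (fun v => if v ∈ L1 then !(s v) else s v)) ∧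
      θ₁.size + θ'₁.size + χ₁.size = Fintype.card V + L1.card) := by
  refine ⟨fun θ₂ θ'₂ χ₂ h h' => ?_, ?_⟩
  · simpa only [filter_ne_flip] using
      CNF.card_add_card_ne_le_size (CNF.defines_append_iff.mpr h) (CNF.defines_append_iff.mpr h')
  · set s₁ : V → Bool := fun v => if v ∈ L1 then !(s v) else s v
    have hagree : ∀ v ∈ L1ᶜ, s₁ v = s v := fun v hv => if_neg (Finset.mem_compl.mp hv)
    refine ⟨CNF.units s L1, CNF.units s₁ L1, CNF.units s L1ᶜ,
      CNF.defines_append_iff.mp (CNF.defines_units_append_units_compl s L1), ?_, ?_⟩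
    · rw [← CNF.units_congr hagree]
      exact CNF.defines_append_iff.mp (CNF.defines_units_append_units_compl s₁ L1)
    · rw [CNF.size_units, CNF.size_units, CNF.size_units, ← Finset.card_add_card_compl L1]
      omega

theorem stmt11 {V : Type} [Fintype V] [DecidableEq V] (s : V → Bool)
    (L1 L2 : Finset V) (hcard : L1.card < L2.card) :
    (∀ θ₂ θ'₂ χ₂ : CNF V,
      (∀ t, (θ₂.feval t && χ₂.feval t) = true ↔ t = s) →
      (∀ t, (θ'₂.feval t && χ₂.feval t) = true ↔
        t = (fun v => if v ∈ L2 then !(s v) else s v)) →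
      Fintype.card V + L2.card ≤ θ₂.size + θ'₂.size + χ₂.size) ∧
    (∃ θ₁ θ'₁ χ₁ : CNF V,
      (∀ t, (θ₁.feval t && χ₁.feval t) = true ↔ t = s) ∧
      (∀ t, (θ'₁.feval t && χ₁.feval t) = true ↔
        t = (fun v => if v ∈ L1 then !(s v) else s v)) ∧
      θ₁.size + θ'₁.size + χ₁.size = Fintype.card V + L1.card) :=
  stmt11_general s L1 L2
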